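/- arXiv:2110.12128 — 3 statements merged into one kernel-verified Lean document; each statement's English description precedes it below -/
import Mathlib

section
/- Let S be a left cancellative monoid with neutral element e, and let R be an associative ring with an S-grading Γ whose support has exactly d elements. If the neutral component R_e is zero, then R^(d+1) = 0, i.e., any product of d+1 elements of R vanishes. -/
/-- Product `a * l₀ * l₁ * ⋯` of a nonempty list of ring elements. -/
def mulList {R : Type*} [Mul R] (a : R) (l : List R) : R := l.foldl (· * ·) a

/-- `pw a n` is `aⁿ` for `n ≥ 1` (junk value `0` at `n = 0`). -/
def pw {R : Type*} [Mul R] [Zero R] (a : R) : ℕ → R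
  | 0 => 0
  | 1 => a
  | n + 2 => pw a (n + 1) * a

/-- Product of `n` elements given by `f` (junk `0` when `n = 0`). -/
def finProd {R : Type*} [Mul R] [Zero R] : {n : ℕ} → (Fin n → R) → R
  | 0, _ => 0
  | n + 1, f => mulList (f 0) (List.ofFn fun i : Fin n => f i.succ)

/-- `R ^ n = 0`: every product of `n` elements of `R` vanishes. -/
def PowZero (R : Type*) [Mul R] [Zero R] (n : ℕ) : Prop :=
  ∀ (a : R) (l : List R), l.length + 1 = n → mulList a l = 0

/-- `T ^ n = 0` for a subset `T` of a ring. -/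
def PowZeroOn {R : Type*} [Mul R] [Zero R] (T : Set R) (n : ℕ) : Prop :=
  ∀ (a : R) (l : List R), a ∈ T → (∀ x ∈ l, x ∈ T) → l.length + 1 = n → mulList a l = 0

/-- `a` is nilpotent: `aⁿ = 0` for some `n ≥ 1`. -/
def IsNilE {R : Type*} [Mul R] [Zero R] (a : R) : Prop := ∃ n, 1 ≤ n ∧ pw a n = 0

/-- A nil ring: every element is nilpotent. -/
def IsNilRing (R : Type*) [Mul R] [Zero R] : Prop := ∀ a : R, IsNilE a

/-- An `S`-grading of the ring `R`: a direct sum decomposition into additive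
subgroups with `R_g R_h ⊆ R_{gh}`. -/
structure IsGrading {S R : Type*} [Monoid S] [NonUnitalRing R] [DecidableEq S]
    (A : S → AddSubgroup R) : Prop where
  mul_mem : ∀ {g h : S} {x y : R}, x ∈ A g → y ∈ A h → x * y ∈ A (g * h)
  isInternal : DirectSum.IsInternal A

/-- Grading by an additively written monoid. -/
structure IsAddGrading {S R : Type*} [AddMonoid S] [NonUnitalRing R] [DecidableEq S]
    (A : S → AddSubgroup R) : Prop where
  mul_mem : ∀ {g h : S} {x y : R}, x ∈ A g → y ∈ A h → x * y ∈ A (g + h)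
  isInternal : DirectSum.IsInternal A

/-- The subset `T` of a ring is `f`-commutative: there are a semigroup `G` acting on it
from the left and a map `f` with `a*b = f(a,b)·(b*a)`. -/
def IsFCommutativeOn {R : Type*} [Mul R] (T : Set R) : Prop :=
  ∃ (G : Type) (_ : Semigroup G) (act : G → R → R),
    (∀ l m : G, ∀ x : R, x ∈ T → act (l * m) x = act l (act m x)) ∧
    (∀ l : G, ∀ x : R, x ∈ T → act l x ∈ T) ∧
    (∀ l : G, ∀ x y : R, x ∈ T → y ∈ T → act l (x * y) = act l x * y) ∧
    ∃ f : R → R → G, ∀ a b : R, a ∈ T → b ∈ T → a * b = act (f a b) (b * a)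

/-- The ring `R` is `f`-commutative. -/
def IsFCommutative (R : Type*) [Mul R] : Prop :=
  ∃ (G : Type) (_ : Semigroup G) (act : G → R → R),
    (∀ l m : G, ∀ x : R, act (l * m) x = act l (act m x)) ∧
    (∀ l : G, ∀ x y : R, act l (x * y) = act l x * y) ∧
    ∃ f : R → R → G, ∀ a b : R, a * b = act (f a b) (b * a)

/-- The order of `g`: least `n ≥ 1` with `gⁿ = 1`, and `0` if no such `n` exists. -/
noncomputable def ordOf {S : Type*} [Monoid S] (g : S) : ℕ := sInf {n | 1 ≤ n ∧ g ^ n = 1}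

/-!
Every product of `d + 1` elements is a sum of products `a₀ a₁ ⋯ a_d` of homogeneous elements, so
it suffices to treat those. If such a product is nonzero, so are its `d + 1` prefixes
`a₀ ⋯ a_k`, whose degrees `g₀ ⋯ g_k` then lie in the `d`-element support; two of them agree, say
for `i < j`, and left cancellation gives `g_{i+1} ⋯ g_j = 1`. Since `R_1 = 0` the factor
`a_{i+1} ⋯ a_j` vanishes, and with it the whole product.
-/

section mulList

variable {R : Type*}

theorem mulList_cons [Mul R] (a b : R) (l : List R) : mulList a (b :: l) = mulList (a * b) l :=
  rfl

theorem mulList_append [Mul R] (a : R) (l m : List R) :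
    mulList a (l ++ m) = mulList (mulList a l) m :=
  List.foldl_append

theorem mulList_concat [Mul R] (a x : R) (l : List R) : mulList a (l ++ [x]) = mulList a l * x :=
  mulList_append a l [x]

theorem mul_mulList [Semigroup R] (a b : R) (l : List R) : mulList (a * b) l = a * mulList b l := by
  induction l generalizing b with
  | nil => rfl
  | cons c l ih => rw [mulList_cons, mulList_cons, mul_assoc, ih]

theorem zero_mulList [MulZeroClass R] (l : List R) : mulList (0 : R) l = 0 := by
  induction l with
  | nil => rfl
  | cons c l ih => rw [mulList_cons, zero_mul, ih]

theorem mulList_take_ne_zero [MulZeroClass R] {a : R} {l : List R} (h : mulList a l ≠ 0)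
    (k : ℕ) : mulList a (l.take k) ≠ 0 := by
  intro hk
  rw [← List.take_append_drop k l, mulList_append, hk, zero_mulList] at h
  exact h rfl

/-- Induction from the right: the last factor enters additively, and the remaining product is
handled by the induction hypothesis applied to `φ ∘ (· * x)`. -/
theorem map_mulList_eq_zero_of_closure_eq_top {M : Type*} [NonUnitalNonAssocSemiring R]
    [AddZeroClass M] {H : Set R} (hH : AddSubmonoid.closure H = ⊤) (φ : R →+ M) (l : List R)
    (h : ∀ a ∈ H, ∀ m : List R, (∀ x ∈ m, x ∈ H) → m.length = l.length → φ (mulList a m) = 0)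
    (a : R) : φ (mulList a l) = 0 := by
  induction l using List.reverseRecOn generalizing φ a with
  | nil =>
    have : φ = 0 := AddMonoidHom.eq_of_eqOn_denseM hH fun b hb => h b hb [] (by simp) rfl
    rw [this, AddMonoidHom.zero_apply]
  | append_singleton l x ih =>
    have hx : φ.comp (AddMonoidHom.mulLeft (mulList a l)) = 0 := by
      refine AddMonoidHom.eq_of_eqOn_denseM hH fun y hy => ?_
      refine ih (φ.comp (AddMonoidHom.mulRight y)) (fun b hb m hm hml => ?_) a
      simpa [mulList_concat] using
        h b hb (m ++ [y]) (by simpa [or_imp, forall_and] using ⟨hm, hy⟩) (by simp [hml])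
    simpa [mulList_concat] using DFunLike.congr_fun hx x

end mulList

theorem List.exists_forall₂_of_forall_exists {α β : Type*} {r : α → β → Prop} {l : List α}
    (h : ∀ a ∈ l, ∃ b, r a b) : ∃ m, List.Forall₂ r l m := by
  induction l with
  | nil => exact ⟨[], .nil⟩
  | cons a l ih =>
    obtain ⟨b, hb⟩ := h a (by simp)
    obtain ⟨m, hm⟩ := ih fun x hx => h x (by simp [hx])
    exact ⟨b :: m, .cons hb hm⟩

section Grading

variable {S R : Type*} [Monoid S] {A : S → Set R}

theorem mulList_mem_of_forall₂ [Mul R]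
    (hmul : ∀ {g h : S} {x y : R}, x ∈ A g → y ∈ A h → x * y ∈ A (g * h))
    {a : R} {g : S} (ha : a ∈ A g) {l : List R} {gs : List S}
    (hl : List.Forall₂ (fun x h => x ∈ A h) l gs) : mulList a l ∈ A (g * gs.prod) := by
  induction hl generalizing a g with
  | nil => simpa [mulList] using ha
  | cons hx _ ih =>
    rw [mulList_cons, List.prod_cons, ← mul_assoc]
    exact ih (hmul ha hx)

variable [IsLeftCancelMul S] [SemigroupWithZero R]

/-- Left cancellation puts the factors between two prefixes of equal degree in degree `1`. -/
theorem mulList_take_eq_zero_of_prod_take_eq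
    (hmul : ∀ {g h : S} {x y : R}, x ∈ A g → y ∈ A h → x * y ∈ A (g * h)) (hA₁ : A 1 ⊆ {0})
    (a : R) {g : S} {l : List R} {gs : List S}
    (hl : List.Forall₂ (fun x h => x ∈ A h) l gs) {i j : ℕ} (hij : i < j) (hj : j ≤ l.length)
    (heq : g * (gs.take i).prod = g * (gs.take j).prod) : mulList a (l.take j) = 0 := by
  obtain ⟨k, hk, rfl⟩ : ∃ k, 0 < k ∧ j = i + k := ⟨j - i, by omega, by omega⟩
  have hmid : ((gs.drop i).take k).prod = 1 := by
    apply mul_left_cancel (a := g * (gs.take i).prod)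
    rw [mul_one, mul_assoc, ← List.prod_append, ← List.take_add, heq]
  obtain ⟨y, rest, hy⟩ : ∃ y rest, (l.drop i).take k = y :: rest :=
    List.exists_cons_of_ne_nil (by simp [List.take_eq_nil_iff]; omega)
  obtain ⟨h, hs, hyh, hrest, hgs⟩ :=
    List.forall₂_cons_left_iff.mp (hy ▸ List.forall₂_take k (List.forall₂_drop i hl))
  have hzero : mulList y rest = 0 := by
    have := mulList_mem_of_forall₂ hmul hyh hrest
    rw [← List.prod_cons, ← hgs, hmid] at this
    exact hA₁ this
  rw [List.take_add, hy, mulList_append, mulList_cons, mul_mulList, hzero, mul_zero]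

/-- Otherwise the `l.length + 1` prefix products are nonzero, so their degrees lie in `T` and two
of them coincide. -/
theorem mulList_eq_zero_of_card_le
    (hmul : ∀ {g h : S} {x y : R}, x ∈ A g → y ∈ A h → x * y ∈ A (g * h)) (hA₁ : A 1 ⊆ {0})
    {T : Finset S} (hT : ∀ g ∉ T, A g ⊆ {0})
    {a : R} {g : S} (ha : a ∈ A g) {l : List R} {gs : List S}
    (hl : List.Forall₂ (fun x h => x ∈ A h) l gs) (hcard : T.card ≤ l.length) :
    mulList a l = 0 := by
  by_contra hne
  have hmem : ∀ k : Fin (l.length + 1), g * (gs.take k).prod ∈ T := fun k => by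
    by_contra hk
    exact mulList_take_ne_zero hne k
      (hT _ hk (mulList_mem_of_forall₂ hmul ha (List.forall₂_take k hl)))
  obtain ⟨i, -, j, -, hij, heq⟩ := Finset.exists_ne_map_eq_of_card_lt_of_maps_to
    (s := Finset.univ) (by simpa using Nat.lt_succ_of_le hcard) fun k _ => hmem k
  rcases Nat.lt_or_gt_of_ne (Fin.val_injective.ne hij) with h | h
  · exact mulList_take_ne_zero hne j
      (mulList_take_eq_zero_of_prod_take_eq hmul hA₁ a hl h (by omega) heq)
  · exact mulList_take_ne_zero hne i
      (mulList_take_eq_zero_of_prod_take_eq hmul hA₁ a hl h (by omega) heq.symm)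

end Grading

theorem DirectSum.IsInternal.addSubmonoid_closure_iUnion_eq_top {ι M : Type*}
    [DecidableEq ι] [AddCommGroup M] {A : ι → AddSubgroup M} (hA : DirectSum.IsInternal A) :
    AddSubmonoid.closure (⋃ i, (A i : Set M)) = ⊤ := by
  rw [AddSubmonoid.closure_iUnion]
  simp only [← AddSubgroup.coe_toAddSubmonoid, AddSubmonoid.closure_eq]
  exact DirectSum.IsInternal.addSubmonoid_iSup_eq_top (fun i => (A i).toAddSubmonoid) hA

theorem stmt_0 {S R : Type*} [Monoid S] [IsLeftCancelMul S] [DecidableEq S]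
    [NonUnitalRing R] (A : S → AddSubgroup R) (hA : IsGrading A)
    (d : ℕ) (hfin : {g : S | A g ≠ ⊥}.Finite) (hcard : hfin.toFinset.card = d)
    (he : A 1 = ⊥) : PowZero R (d + 1) := by
  intro a l hlen
  refine map_mulList_eq_zero_of_closure_eq_top
    hA.isInternal.addSubmonoid_closure_iUnion_eq_top (AddMonoidHom.id R) l ?_ a
  intro b hb m hm hml
  simp only [Set.mem_iUnion, SetLike.mem_coe] at hb hm
  obtain ⟨g, hb⟩ := hb
  obtain ⟨gs, hgs⟩ := List.exists_forall₂_of_forall_exists hm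
  have hsupp : ∀ g ∉ hfin.toFinset, (A g : Set R) ⊆ {0} := fun g hg x hx => by
    rw [hfin.mem_toFinset, Set.mem_ofPred_eq, not_not] at hg
    rwa [hg, SetLike.mem_coe, AddSubgroup.mem_bot] at hx
  exact mulList_eq_zero_of_card_le (A := fun g => (A g : Set R)) hA.mul_mem (by simp [he])
    hsupp hb hgs (by omega)
end

section
/- Let S be a left cancellative monoid and R an associative ring with an S-grading Γ of finite support. If the neutral component R_e is a nonzero nil ring, then every homogeneous element of R is nilpotent (i.e., R is S-nil). -/
lemma pw_succ' {R : Type*} [Mul R] [Zero R] (a : R) {n : ℕ} (h : 1 ≤ n) :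
    pw a (n + 1) = pw a n * a := by
  cases n with
  | zero => omega
  | succ n => rfl

lemma pw_add' {R : Type*} [Semigroup R] [Zero R] (a : R) {m n : ℕ} (hm : 1 ≤ m) (hn : 1 ≤ n) :
    pw a (m + n) = pw a m * pw a n := by
  induction n with
  | zero => omega
  | succ n ih =>
    cases n with
    | zero => simpa [pw] using pw_succ' a hm
    | succ n =>
      rw [show m + (n + 1 + 1) = (m + (n + 1)) + 1 by ring,
        pw_succ' a (n := m + (n + 1)) (by omega), ih (by omega),
        pw_succ' a (n := n + 1) (by omega)]
      exact mul_assoc _ _ _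

lemma pw_mul' {R : Type*} [Semigroup R] [Zero R] (a : R) {d m : ℕ} (hd : 1 ≤ d) (hm : 1 ≤ m) :
    pw a (d * m) = pw (pw a d) m := by
  induction m with
  | zero => omega
  | succ m ih =>
    cases m with
    | zero => simp [pw]
    | succ m =>
      rw [pw_succ' _ (by omega), ← ih (by omega), show d * (m + 1 + 1) = d * (m + 1) + d by ring,
        pw_add' a (Nat.mul_pos hd (by omega)) hd]

lemma pw_mem' {S R : Type*} [Monoid S] [DecidableEq S]
    [NonUnitalRing R] (A : S → AddSubgroup R) (hA : IsGrading A)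
    {g : S} {a : R} (ha : a ∈ A g) {n : ℕ} (hn : 1 ≤ n) : pw a n ∈ A (g ^ n) := by
  induction n with
  | zero => omega
  | succ n ih =>
    cases n with
    | zero => simpa [pw] using ha
    | succ n =>
      rw [pw_succ' _ (by omega), pow_succ]
      exact hA.mul_mem (ih (by omega)) ha

theorem stmt_1 {S R : Type*} [Monoid S] [IsLeftCancelMul S] [DecidableEq S]
    [NonUnitalRing R] (A : S → AddSubgroup R) (hA : IsGrading A)
    (hfin : {g : S | A g ≠ ⊥}.Finite)
    (hne : A 1 ≠ ⊥) (hnil : ∀ a ∈ A 1, IsNilE a) :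
    ∀ (g : S), ∀ a ∈ A g, IsNilE a := by
  intro g a ha
  by_cases hz : ∃ n, 1 ≤ n ∧ pw a n = 0
  · exact hz
  push_neg at hz
  -- all powers are nonzero, so all A (g^n) are nonzero, pigeonhole gives g^d = 1
  have hmem : ∀ n : ℕ, g ^ (n + 1) ∈ {s : S | A s ≠ ⊥} := by
    intro n
    have := pw_mem' A hA ha (n := n + 1) (by omega)
    intro hbot
    exact hz (n + 1) (by omega) (by simpa [hbot, AddSubgroup.mem_bot] using this)
  obtain ⟨m, -, n, -, hmn, heq⟩ :=
    Set.infinite_univ.exists_ne_map_eq_of_mapsTo (f := fun n : ℕ => g ^ (n + 1))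
      (fun n _ => hmem n) hfin
  wlog hlt : m < n generalizing m n
  · exact this n m hmn.symm heq.symm (by omega)
  have hone : g ^ (n - m) = 1 := by
    have : g ^ (m + 1) * g ^ (n - m) = g ^ (m + 1) * 1 := by
      rw [mul_one, ← pow_add]
      rw [show m + 1 + (n - m) = n + 1 by omega]
      exact heq.symm
    exact mul_left_cancel this
  have hd : 1 ≤ n - m := by omega
  have hA1 : pw a (n - m) ∈ A 1 := by simpa [hone] using pw_mem' A hA ha hd
  obtain ⟨k, hk, hk0⟩ := hnil _ hA1
  exact ⟨(n - m) * k, Nat.mul_pos hd hk, by rw [pw_mul' a hd hk]; exact hk0⟩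
end

section
/- Let S be a left cancellative monoid and R a ring with a finite S-grading. If the neutral component R_e is nil and f-commutative, then R is nil. Moreover, if R_e is nil of bounded index, then R is nil of bounded index. -/
/-
Write `a = ∑ g, x g` with `x g ∈ R_g`. Then `aⁿ` is a sum of products `x g₁ ⋯ x gₙ`, and it
suffices to show that all sufficiently long such products vanish. Follow the path of partial
degrees `g₁ ⋯ gⱼ`: while the product is nonzero it stays in the finite support of the grading.
By induction on the number of states, a long nonzero product returns to a single state `τ`
many times with bounded gaps; by left cancellativity it then contains many consecutive blocks of
degree `e`, whose values range over a finite set. In `R_e`, f-commutativity makes the vanishing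
of a product independent of the order of its factors, so a block value occurring `s` times,
with `s` its nilpotency index, kills the whole product.
-/

namespace Set
variable {U : Type*} [MonoidWithZero U]

/-- A right-stable form of reversibility (`ab = 0 → ba = 0`): the consequence of
f-commutativity that the argument uses. -/
def IsReversibleOn (T : Set U) : Prop :=
  ∀ a ∈ T, ∀ b ∈ T, ∀ p ∈ insert 1 T, a * b * p = 0 → b * a * p = 0

lemma list_prod_mem_insert_one {T : Set U} (hT : ∀ a ∈ T, ∀ b ∈ T, a * b ∈ T)
    {l : List U} (hl : ∀ z ∈ l, z ∈ T) : l.prod ∈ insert 1 T := by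
  induction l with
  | nil => exact mem_insert 1 T
  | cons a l ih =>
    simp only [List.forall_mem_cons] at hl
    rcases ih hl.2 with h | h
    · simpa [h] using Or.inr hl.1
    · exact Or.inr (by simpa using hT a hl.1 _ h)

namespace IsReversibleOn
variable {T : Set U} (hrev : T.IsReversibleOn) (hT : ∀ a ∈ T, ∀ b ∈ T, a * b ∈ T)
include hrev hT

lemma mul_swap_eq_zero {u a b v : U} (hu : u ∈ insert 1 T) (ha : a ∈ T) (hb : b ∈ T)
    (hv : v ∈ insert 1 T) (h : u * a * b * v = 0) : u * b * a * v = 0 := by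
  rcases hu with rfl | hu
  · simpa using hrev a ha b hb v hv (by simpa using h)
  -- `u a b v → b u a v → a b u v → b a u v → u b a v`, each time swapping two leading factors
  have huv : u * v ∈ insert 1 T := by
    rcases hv with rfl | hv
    · simpa using Or.inr hu
    · exact Or.inr (hT u hu v hv)
  have h₁ := hrev _ (hT u hu a ha) b hb v hv h
  have h₂ := hrev _ (hT b hb u hu) a ha v hv (by simpa only [mul_assoc] using h₁)
  have h₃ := hrev a ha b hb _ huv (by simpa only [mul_assoc] using h₂)
  have h₄ := hrev _ (hT b hb a ha) u hu v hv (by simpa only [mul_assoc] using h₃)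
  simpa only [mul_assoc] using h₄

lemma prod_eq_zero_of_perm {l l' : List U} (hll' : l.Perm l') (hl : ∀ z ∈ l, z ∈ T)
    (h : l.prod = 0) : l'.prod = 0 := by
  suffices ∀ u ∈ insert 1 T, u * l.prod = 0 → u * l'.prod = 0 by
    simpa using this 1 (mem_insert 1 T) (by simpa using h)
  clear h
  induction hll' with
  | nil => exact fun _ _ h => h
  | cons a _ ih =>
    simp only [List.forall_mem_cons] at hl
    intro u hu h
    rcases hu with rfl | hu
    · simpa [← mul_assoc] using ih hl.2 a (Or.inr hl.1) (by simpa using h)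
    · simpa [← mul_assoc] using ih hl.2 (u * a) (Or.inr (hT u hu a hl.1))
        (by simpa [mul_assoc] using h)
  | swap a b l =>
    simp only [List.forall_mem_cons] at hl
    intro u hu h
    have := mul_swap_eq_zero hrev hT hu hl.1 hl.2.1 (list_prod_mem_insert_one hT hl.2.2)
      (by simpa [mul_assoc] using h)
    simpa [mul_assoc] using this
  | trans h₁₂ _ ih₁ ih₂ =>
    exact fun u hu h => ih₂ (fun z hz => hl z (h₁₂.symm.subset hz)) u hu (ih₁ hl u hu h)

lemma prod_eq_zero_of_le_count [DecidableEq U] {l : List U} (hl : ∀ z ∈ l, z ∈ T) {b : U}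
    {s : ℕ} (hb : b ^ s = 0) (hs : s ≤ l.count b) : l.prod = 0 := by
  obtain ⟨r, hr⟩ := (List.replicate_sublist_iff.2 hs).exists_perm_append
  refine prod_eq_zero_of_perm hrev hT hr.symm (fun z hz => hl z (hr.symm.subset hz)) ?_
  rw [List.prod_append, List.prod_replicate, hb, zero_mul]

end IsReversibleOn
end Set

lemma List.exists_le_count_of_ncard_mul_lt_length {α : Type*} [DecidableEq α] {V : Set α}
    (hV : V.Finite) {l : List α} (hl : ∀ z ∈ l, z ∈ V) {s : ℕ}
    (h : V.ncard * (s - 1) < l.length) : ∃ b ∈ l, s ≤ l.count b := by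
  by_contra! hcount
  have hsum := Multiset.sum_count_eq_card (s := hV.toFinset) (m := (l : Multiset α))
    (by simpa using hl)
  have := Finset.sum_le_card_nsmul hV.toFinset (fun b => Multiset.count b (l : Multiset α))
    (s - 1) fun b _ => by
      by_cases hb : b ∈ l
      · have := hcount b hb; simp only [Multiset.coe_count]; omega
      · simp [List.count_eq_zero_of_not_mem hb]
  rw [hsum, ← Set.ncard_eq_toFinset_card V hV, Multiset.coe_card, smul_eq_mul] at this
  omega

section Paths
variable {S : Type*} [Monoid S]

def StaysIn (D : Finset S) : S → List S → Prop
  | _, [] => True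
  | σ, g :: w => σ * g ∈ D ∧ StaysIn D (σ * g) w

@[simp] lemma staysIn_nil (D : Finset S) (σ : S) : StaysIn D σ [] := trivial

@[simp] lemma staysIn_cons {D : Finset S} {σ g : S} {w : List S} :
    StaysIn D σ (g :: w) ↔ σ * g ∈ D ∧ StaysIn D (σ * g) w := Iff.rfl

lemma staysIn_append {D : Finset S} {σ : S} {u v : List S} :
    StaysIn D σ (u ++ v) ↔ StaysIn D σ u ∧ StaysIn D (σ * u.prod) v := by
  induction u generalizing σ with
  | nil => simp
  | cons g u ih => simp [ih, and_assoc, mul_assoc]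

lemma staysIn_erase_or_exists_visit [DecidableEq S] {D : Finset S} (τ : S) {σ : S}
    {w : List S} (hw : StaysIn D σ w) :
    StaysIn (D.erase τ) σ w ∨
      ∃ P g R, w = P ++ g :: R ∧ StaysIn (D.erase τ) σ P ∧ σ * P.prod * g = τ := by
  induction w generalizing σ with
  | nil => exact Or.inl trivial
  | cons g w ih =>
    obtain ⟨hg, hw⟩ := hw
    by_cases hτ : σ * g = τ
    · exact Or.inr ⟨[], g, w, rfl, trivial, by simpa using hτ⟩
    rcases ih hw with hw' | ⟨P, g', R, rfl, hP, hτ'⟩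
    · exact Or.inl ⟨Finset.mem_erase.2 ⟨hτ, hg⟩, hw'⟩
    · exact Or.inr ⟨g :: P, g', R, rfl, ⟨Finset.mem_erase.2 ⟨hτ, hg⟩, hP⟩,
        by simpa [mul_assoc] using hτ'⟩

end Paths

def boundedWords {S : Type*} (E : Finset S) (ℓ : ℕ) : Set (List S) :=
  {w | w.length ≤ ℓ ∧ ∀ g ∈ w, g ∈ E}

lemma boundedWords_finite {S : Type*} (E : Finset S) (ℓ : ℕ) :
    (boundedWords E ℓ).Finite := by
  refine ((List.finite_length_le E ℓ).image (List.map Subtype.val)).subset ?_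
  rintro w ⟨hlen, hE⟩
  exact ⟨w.attach.map fun g => ⟨g.1, hE g.1 g.2⟩, by simpa using hlen, by simp⟩

/-- If `ℓ` is the bound for `n` states, a nonzero word of length `ℓ * (K * (s - 1) + 2)` through
`n + 1` states consists of a head and a tail of length `≤ ℓ` around more than `K * (s - 1)`
blocks of length `≤ ℓ`, where `K` counts the words of length `≤ ℓ`; so some block value occurs
`s` times. -/
noncomputable def lengthBound {S : Type*} (E : Finset S) (s : ℕ → ℕ) : ℕ → ℕ
  | 0 => 1
  | n + 1 => lengthBound E s n *
      ((boundedWords E (lengthBound E s n)).ncard * (s (lengthBound E s n) - 1) + 2)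

lemma lengthBound_pos {S : Type*} (E : Finset S) (s : ℕ → ℕ) (n : ℕ) :
    0 < lengthBound E s n := by
  induction n with
  | zero => simp [lengthBound]
  | succ n ih => exact Nat.mul_pos ih (by omega)

section Vanishing
variable {S U : Type*} [Monoid S] [MonoidWithZero U]

def LongPathsVanish (x : S → U) (D : Finset S) (ℓ : ℕ) : Prop :=
  ∀ σ w, StaysIn D σ w → ℓ ≤ w.length → (w.map x).prod = 0

variable [DecidableEq S] {x : S → U} {D : Finset S} {τ : S} {ℓ : ℕ}

lemma LongPathsVanish.exists_visit (h : LongPathsVanish x (D.erase τ) ℓ) {σ : S}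
    {w : List S} (hw : StaysIn D σ w) (hw0 : (w.map x).prod ≠ 0) :
    w.length < ℓ ∨ ∃ P R, w = P ++ R ∧ P ≠ [] ∧ P.length ≤ ℓ ∧ σ * P.prod = τ ∧
      StaysIn D τ R := by
  rcases staysIn_erase_or_exists_visit τ hw with hw' | ⟨P, g, R, rfl, hP, hτ⟩
  · exact Or.inl (by by_contra! hℓ; exact hw0 (h σ w hw' hℓ))
  have hP0 : (P.map x).prod ≠ 0 := fun hP0 => hw0 (by simp [hP0])
  have hPℓ : P.length < ℓ := by by_contra! hℓ; exact hP0 (h σ P hP hℓ)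
  refine Or.inr ⟨P ++ [g], R, by simp, by simp, by rw [List.length_append]; simpa using hPℓ,
    by simpa [mul_assoc] using hτ, ?_⟩
  have := (staysIn_append.1 (show StaysIn D σ ((P ++ [g]) ++ R) by simpa using hw)).2
  simpa [← mul_assoc, hτ] using this

variable [IsLeftCancelMul S]

lemma LongPathsVanish.exists_blocks (h : LongPathsVanish x (D.erase τ) ℓ) (w : List S)
    (hw : StaysIn D τ w) (hw0 : (w.map x).prod ≠ 0) :
    ∃ (Bs : List (List S)) (Q : List S), w = Bs.flatten ++ Q ∧
      (∀ B ∈ Bs, B ≠ [] ∧ B.length ≤ ℓ ∧ B.prod = 1) ∧ Q.length < ℓ := by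
  rcases h.exists_visit hw hw0 with hℓ | ⟨P, R, rfl, hP, hPℓ, hτ, hR⟩
  · exact ⟨[], w, rfl, by simp, hℓ⟩
  have hR0 : (R.map x).prod ≠ 0 := fun hR0 => hw0 (by simp [hR0])
  have : R.length < (P ++ R).length := by simp [List.length_pos_iff.2 hP]
  obtain ⟨Bs, Q, rfl, hBs, hQ⟩ := h.exists_blocks R hR hR0
  refine ⟨P :: Bs, Q, by simp, ?_, hQ⟩
  simp only [List.mem_cons, forall_eq_or_imp]
  exact ⟨⟨hP, hPℓ, mul_left_cancel (a := τ) (by simpa using hτ)⟩, hBs⟩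
termination_by w.length

variable {T : Set U} {E : Finset S} (hrev : T.IsReversibleOn)
  (hT : ∀ a ∈ T, ∀ b ∈ T, a * b ∈ T)
  (hxT : ∀ w : List S, w ≠ [] → w.prod = 1 → (w.map x).prod ∈ T)
  (hxE : ∀ g, x g ≠ 0 → g ∈ E)
include hrev hT hxT hxE

lemma LongPathsVanish.of_erase {s : ℕ}
    (hs : ∀ B ∈ boundedWords E ℓ, B ≠ [] → B.prod = 1 → (B.map x).prod ^ s = 0)
    (h : LongPathsVanish x (D.erase τ) ℓ) :
    LongPathsVanish x D (ℓ * ((boundedWords E ℓ).ncard * (s - 1) + 2)) := by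
  classical
  intro σ w hw hlen
  by_contra hw0
  have hwE : ∀ g ∈ w, g ∈ E := fun g hg =>
    hxE g fun h0 => hw0 (List.prod_eq_zero (List.mem_map.2 ⟨g, hg, h0⟩))
  rcases h.exists_visit hw hw0 with hℓ | ⟨P, R, rfl, -, hPℓ, -, hR⟩
  · exact absurd hlen (not_le.2 (lt_of_lt_of_le hℓ (Nat.le_mul_of_pos_right _ (by omega))))
  have hR0 : (R.map x).prod ≠ 0 := fun hR0 => hw0 (by simp [hR0])
  obtain ⟨Bs, Q, rfl, hBs, hQ⟩ := h.exists_blocks R hR hR0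
  set N := (boundedWords E ℓ).ncard * (s - 1)
  have hflat : Bs.flatten.length ≤ Bs.length * ℓ := by
    rw [List.length_flatten, ← smul_eq_mul, ← List.length_map (f := List.length)]
    exact List.sum_le_card_nsmul _ _ (by simpa using fun B hB => (hBs B hB).2.1)
  have hN : N < Bs.length := by
    simp only [List.length_append] at hlen
    exact Nat.lt_of_mul_lt_mul_left (a := ℓ) (by nlinarith)
  have hblocks : ∀ z ∈ Bs.map fun B => (B.map x).prod,
      (z ∈ T ∧ z ^ s = 0) ∧ z ∈ (fun B => (B.map x).prod) '' boundedWords E ℓ := by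
    simp only [List.mem_map, forall_exists_index, and_imp]
    rintro _ B hB rfl
    obtain ⟨hB0, hBℓ, hB1⟩ := hBs B hB
    have hBE : B ∈ boundedWords E ℓ := ⟨hBℓ, fun g hg => hwE g (by
      simp only [List.mem_append, List.mem_flatten]
      exact Or.inr (Or.inl ⟨B, hB, hg⟩))⟩
    exact ⟨⟨hxT B hB0 hB1, hs B hBE hB0 hB1⟩, B, hBE, rfl⟩
  obtain ⟨b, hb, hcount⟩ := List.exists_le_count_of_ncard_mul_lt_length
    ((boundedWords_finite E ℓ).image _) (fun z hz => (hblocks z hz).2)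
    (lt_of_le_of_lt (Nat.mul_le_mul_right _ (Set.ncard_image_le (boundedWords_finite E ℓ)))
      (by simpa using hN))
  have hprod := hrev.prod_eq_zero_of_le_count hT (fun z hz => (hblocks z hz).1.1)
    (hblocks b hb).1.2 hcount
  apply hR0
  simp only [List.map_append, List.prod_append, List.map_flatten, List.prod_flatten,
    List.map_map]
  rw [Function.comp_def, hprod, zero_mul]

theorem longPathsVanish_lengthBound {s : ℕ → ℕ}
    (hs : ∀ ℓ, ∀ B ∈ boundedWords E ℓ, B ≠ [] → B.prod = 1 → (B.map x).prod ^ s ℓ = 0)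
    (D : Finset S) : LongPathsVanish x D (lengthBound E s D.card) := by
  induction hn : D.card generalizing D with
  | zero =>
    rintro σ (_ | ⟨g, w⟩) hw hlen
    · simp [lengthBound] at hlen
    · simp [Finset.card_eq_zero.1 hn] at hw
  | succ n ih =>
    obtain ⟨τ, hτ⟩ := Finset.card_pos.1 (by omega : 0 < D.card)
    exact (ih (D.erase τ) (by simp [Finset.card_erase_of_mem hτ, hn])).of_erase
      hrev hT hxT hxE (hs _)

end Vanishing

lemma sum_pow_eq_zero_of_forall_length_eq {S U : Type*} [Semiring U] (x : S → U)
    (F : Finset S) {n : ℕ} (h : ∀ w : List S, w.length = n → (w.map x).prod = 0) :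
    (∑ g ∈ F, x g) ^ n = 0 := by
  suffices ∀ u : List S, (∀ w : List S, w.length = n → ((u ++ w).map x).prod = 0) →
      (u.map x).prod * (∑ g ∈ F, x g) ^ n = 0 by
    simpa using this [] (by simpa using h)
  clear h
  induction n with
  | zero => intro u h; simpa using h [] rfl
  | succ n ih =>
    intro u h
    rw [pow_succ', ← mul_assoc, Finset.mul_sum, Finset.sum_mul]
    refine Finset.sum_eq_zero fun g _ => ?_
    have := ih (u ++ [g]) fun w hw => by simpa using h (g :: w) (by simp [hw])
    simpa [mul_assoc] using this

lemma Set.Finite.exists_forall_pow_eq_zero {U : Type*} [MonoidWithZero U] {V : Set U}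
    (hV : V.Finite) (h : ∀ u ∈ V, IsNilpotent u) : ∃ n, ∀ u ∈ V, u ^ n = 0 :=
  ⟨hV.toFinset.sup fun u => nilpotencyClass u, fun u hu =>
    pow_eq_zero_of_le (Finset.le_sup (f := fun u => nilpotencyClass u) (by simpa using hu))
      (pow_nilpotencyClass (h u hu))⟩

section Graded
variable {S U : Type*} [Monoid S] [Semiring U] {B : S → Set U} {E : Finset S} {x : S → U}
  (hB : ∀ {g h : S} {u v : U}, u ∈ B g → v ∈ B h → u * v ∈ B (g * h)) (hx : ∀ g, x g ∈ B g)
include hB hx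

lemma prod_map_mem_of_ne_nil {w : List S} (hw : w ≠ []) : (w.map x).prod ∈ B w.prod := by
  induction w with
  | nil => exact absurd rfl hw
  | cons g w ih =>
    rcases eq_or_ne w [] with rfl | hw'
    · simpa using hx g
    · simpa using hB (hx g) (ih hw')

variable (hBE : ∀ g, ∀ u ∈ B g, u ≠ 0 → g ∈ E)
include hBE

lemma staysIn_of_prod_ne_zero {w : List S} (hw : (w.map x).prod ≠ 0) : StaysIn E 1 w := by
  suffices ∀ u : List S, ((u ++ w).map x).prod ≠ 0 → StaysIn E u.prod w by
    simpa using this [] hw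
  clear hw
  induction w with
  | nil => simp
  | cons g w ih =>
    intro u hu
    have hug : ((u ++ [g]).map x).prod ≠ 0 := fun h => hu (by
      rw [show u ++ g :: w = u ++ [g] ++ w by simp, List.map_append, List.prod_append, h,
        zero_mul])
    refine ⟨?_, by simpa using ih (u ++ [g]) (by simpa using hu)⟩
    simpa using hBE _ _ (prod_map_mem_of_ne_nil hB hx (by simp)) hug

variable [IsLeftCancelMul S] [DecidableEq S] (hrev : (B 1).IsReversibleOn)
include hrev

theorem sum_pow_lengthBound_eq_zero {s : ℕ → ℕ}
    (hs : ∀ ℓ, ∀ w ∈ boundedWords E ℓ, w ≠ [] → w.prod = 1 → (w.map x).prod ^ s ℓ = 0)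
    (F : Finset S) : (∑ g ∈ F, x g) ^ lengthBound E s E.card = 0 := by
  refine sum_pow_eq_zero_of_forall_length_eq x F fun w hw => ?_
  by_contra hw0
  have hT : ∀ a ∈ B 1, ∀ b ∈ B 1, a * b ∈ B 1 := fun a ha b hb => by simpa using hB ha hb
  exact hw0 (longPathsVanish_lengthBound hrev hT
    (fun w hw h1 => h1 ▸ prod_map_mem_of_ne_nil hB hx hw)
    (fun g hg => hBE g _ (hx g) hg) hs E 1 w (staysIn_of_prod_ne_zero hB hx hBE hw0) hw.ge)

theorem sum_pow_lengthBound_const_eq_zero {s : ℕ} (hs : ∀ u ∈ B 1, u ^ s = 0)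
    (F : Finset S) : (∑ g ∈ F, x g) ^ lengthBound E (fun _ => s) E.card = 0 :=
  sum_pow_lengthBound_eq_zero hB hx hBE hrev
    (fun _ _ _ hw h1 => hs _ (h1 ▸ prod_map_mem_of_ne_nil hB hx hw)) F

theorem isNilpotent_sum_of_nil (hnil : ∀ u ∈ B 1, IsNilpotent u) (F : Finset S) :
    IsNilpotent (∑ g ∈ F, x g) := by
  have hexp : ∀ ℓ, ∃ n, ∀ w ∈ boundedWords E ℓ, w ≠ [] → w.prod = 1 →
      (w.map x).prod ^ n = 0 := fun ℓ => by
    have hV := ((boundedWords_finite E ℓ).sep fun w => w ≠ [] ∧ w.prod = 1).image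
      fun w => (w.map x).prod
    obtain ⟨n, hn⟩ := hV.exists_forall_pow_eq_zero <| by
      rintro _ ⟨w, ⟨-, hw, h1⟩, rfl⟩
      exact hnil _ (h1 ▸ prod_map_mem_of_ne_nil hB hx hw)
    exact ⟨n, fun w hw hw0 h1 => hn _ ⟨w, ⟨hw, hw0, h1⟩, rfl⟩⟩
  choose s hs using hexp
  exact ⟨_, sum_pow_lengthBound_eq_zero hB hx hBE hrev hs F⟩

end Graded

lemma Unitization.inr_eq_zero_iff {R A : Type*} [Zero R] [Zero A] {a : A} :
    (Unitization.inr a : Unitization R A) = 0 ↔ a = 0 := by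
  rw [← Unitization.inr_zero R, Unitization.inr_inj]

section Unitization
variable {R : Type*} [NonUnitalRing R]

lemma Unitization.inr_pw (a : R) {n : ℕ} (hn : 1 ≤ n) :
    (Unitization.inr (pw a n) : Unitization ℤ R) = Unitization.inr a ^ n := by
  induction n, hn using Nat.le_induction with
  | base => simp [pw]
  | succ n hn ih =>
    obtain ⟨m, rfl⟩ := Nat.exists_eq_add_of_le' hn
    rw [pw, Unitization.inr_mul, ih, ← pow_succ]

lemma isNilE_iff_isNilpotent_inr (a : R) :
    IsNilE a ↔ IsNilpotent (Unitization.inr a : Unitization ℤ R) := by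
  constructor
  · rintro ⟨n, hn, ha⟩
    exact ⟨n, by rw [← Unitization.inr_pw a hn, ha, Unitization.inr_zero ℤ]⟩
  · rintro ⟨n, ha⟩
    refine ⟨n + 1, by omega, (Unitization.inr_eq_zero_iff (R := ℤ)).1 ?_⟩
    rw [Unitization.inr_pw a (by omega), pow_succ, ha, zero_mul]

lemma Unitization.inr_sum {S : Type*} (F : Finset S) (x : S → R) :
    (Unitization.inr (∑ g ∈ F, x g) : Unitization ℤ R) = ∑ g ∈ F, Unitization.inr (x g) :=
  map_sum (Unitization.inrNonUnitalAlgHom ℤ R) x F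

lemma IsFCommutativeOn.isReversibleOn_inr_image {T : Set R} (hT : IsFCommutativeOn T)
    (h0 : (0 : R) ∈ T) (hmul : ∀ a ∈ T, ∀ b ∈ T, a * b ∈ T) :
    (Unitization.inr '' T : Set (Unitization ℤ R)).IsReversibleOn := by
  obtain ⟨G, _, act, -, -, hact, f, hf⟩ := hT
  have hact0 : ∀ l, act l 0 = 0 := fun l => by simpa using hact l 0 0 h0 h0
  rintro _ ⟨a, ha, rfl⟩ _ ⟨b, hb, rfl⟩ p hp h
  rcases hp with rfl | ⟨p, hp, rfl⟩
  · have hab : a * b = 0 :=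
      (Unitization.inr_eq_zero_iff (R := ℤ)).1 (by simpa [Unitization.inr_mul ℤ] using h)
    simp [← Unitization.inr_mul ℤ, hf b a hb ha, hab, hact0]
  · have habp : a * b * p = 0 :=
      (Unitization.inr_eq_zero_iff (R := ℤ)).1 (by simpa [Unitization.inr_mul ℤ] using h)
    rw [← Unitization.inr_mul ℤ, ← Unitization.inr_mul ℤ, hf b a hb ha,
      ← hact _ _ _ (hmul a ha b hb) hp, habp, hact0, Unitization.inr_zero]

end Unitization

section Grading
variable {S R : Type*} [Monoid S] [DecidableEq S] [NonUnitalRing R] {A : S → AddSubgroup R}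

lemma IsGrading.exists_eq_sum (hA : IsGrading A) (a : R) :
    ∃ (x : S → R) (F : Finset S), (∀ g, x g ∈ A g) ∧ a = ∑ g ∈ F, x g := by
  classical
  obtain ⟨v, rfl⟩ := hA.isInternal.2 a
  exact ⟨fun g => v g, v.support, fun g => (v g).2,
    DirectSum.coeAddMonoidHom_eq_dfinsuppSum A v⟩

lemma IsGrading.inr_image_mul_mem (hA : IsGrading A) {g h : S} {u v : Unitization ℤ R}
    (hu : u ∈ Unitization.inr '' (A g : Set R)) (hv : v ∈ Unitization.inr '' (A h : Set R)) :
    u * v ∈ Unitization.inr '' (A (g * h) : Set R) := by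
  obtain ⟨u, hu, rfl⟩ := hu
  obtain ⟨v, hv, rfl⟩ := hv
  exact ⟨u * v, hA.mul_mem hu hv, Unitization.inr_mul ℤ u v⟩

omit [Monoid S] [DecidableEq S] in
lemma mem_toFinset_of_ne_zero_mem_inr_image (hfin : {g : S | A g ≠ ⊥}.Finite) (g : S)
    (u : Unitization ℤ R) (hu : u ∈ Unitization.inr '' (A g : Set R)) (hu0 : u ≠ 0) :
    g ∈ hfin.toFinset := by
  obtain ⟨u, hu, rfl⟩ := hu
  refine hfin.mem_toFinset.2 fun hbot => hu0 ?_
  rw [AddSubgroup.mem_bot.1 (hbot ▸ hu : u ∈ (⊥ : AddSubgroup R)), Unitization.inr_zero]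

end Grading

theorem stmt_6 {S R : Type*} [Monoid S] [IsLeftCancelMul S] [DecidableEq S]
    [NonUnitalRing R] (A : S → AddSubgroup R) (hA : IsGrading A)
    (hfin : {g : S | A g ≠ ⊥}.Finite)
    (hfc : IsFCommutativeOn (A 1 : Set R)) (hnil : ∀ a ∈ A 1, IsNilE a) :
    IsNilRing R ∧
      ∀ s, 1 ≤ s → (∀ a ∈ A 1, pw a s = 0) →
        ∃ t, 1 ≤ t ∧ ∀ a : R, pw a t = 0 := by
  -- products of words are computed in the unitization, where the empty word has value `1`
  have hrev := hfc.isReversibleOn_inr_image (A 1).zero_mem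
    fun a ha b hb => by simpa using hA.mul_mem ha hb
  have hx : ∀ {x : S → R}, (∀ g, x g ∈ A g) →
      ∀ g, (x g : Unitization ℤ R) ∈ Unitization.inr '' (A g : Set R) :=
    fun hx g => ⟨_, hx g, rfl⟩
  refine ⟨fun a => ?_, fun s hs1 hs => ?_⟩
  · obtain ⟨x, F, hxA, rfl⟩ := hA.exists_eq_sum a
    rw [isNilE_iff_isNilpotent_inr, Unitization.inr_sum]
    refine isNilpotent_sum_of_nil hA.inr_image_mul_mem (hx hxA) (mem_toFinset_of_ne_zero_mem_inr_image hfin)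
      hrev ?_ F
    rintro _ ⟨b, hb, rfl⟩
    exact (isNilE_iff_isNilpotent_inr b).1 (hnil b hb)
  · refine ⟨lengthBound hfin.toFinset (fun _ => s) hfin.toFinset.card,
      lengthBound_pos _ _ _, fun a => ?_⟩
    obtain ⟨x, F, hxA, rfl⟩ := hA.exists_eq_sum a
    rw [← (Unitization.inr_eq_zero_iff (R := ℤ)), Unitization.inr_pw _ (lengthBound_pos _ _ _),
      Unitization.inr_sum]
    refine sum_pow_lengthBound_const_eq_zero hA.inr_image_mul_mem (hx hxA)
      (mem_toFinset_of_ne_zero_mem_inr_image hfin) hrev ?_ F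
    rintro _ ⟨b, hb, rfl⟩
    rw [← Unitization.inr_pw b hs1, hs b hb, Unitization.inr_zero]
end
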